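/- arXiv:2005.09879 — 4 statements merged into one kernel-verified Lean document; each statement's English description precedes it below -/
import Mathlib

section
/- Let 0 ≤ σ₁ ≤ σ₂ be real numbers and let Σ be the 2×2 diagonal matrix with entries σ₁, σ₂. Then for every θ ∈ ℝ, 14 · ∑_{k=0}^{5} (|Σ R_{θ + kπ/3} e₁| − 1)² ≥ (σ₁ − 1)² + (σ₂ − 1)², where R_α denotes the counterclockwise rotation matrix by angle α and e₁ = (1,0). -/
/-!
Since |Σ R_α e₁|² = σ₁² + (σ₂² − σ₁²) sin²α depends only on α mod π, the six terms are three
terms counted twice. Among the directions θ, θ + π/3, θ + 2π/3 some α has cos²α ≥ 3/4 and some β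
has cos²β ≤ 1/4, so u = |Σ R_α e₁| and v = |Σ R_β e₁| satisfy σ₁ ≤ u ≤ √((3σ₁² + σ₂²)/4) and
√((σ₁² + 3σ₂²)/4) ≤ v ≤ σ₂. If σ₂ ≤ 1 (resp. σ₁ ≥ 1), u (resp. v) lies on the same side of 1 as
σ₁ (resp. σ₂) at a comparable distance. If σ₁ ≤ 1 ≤ σ₂, the gap v − u ≥ (σ₂ − σ₁)/3 gives
(u − 1)² + (v − 1)² ≥ (σ₂ − σ₁)²/18 ≥ ((σ₁ − 1)² + (σ₂ − 1)²)/18.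
-/

open Real Finset

noncomputable def vnorm (v : Fin 2 → ℝ) : ℝ := Real.sqrt (∑ i, (v i)^2)

noncomputable def Rot (α : ℝ) : Matrix (Fin 2) (Fin 2) ℝ :=
  !![Real.cos α, -Real.sin α; Real.sin α, Real.cos α]

def e1 : Fin 2 → ℝ := ![1, 0]

lemma vnorm_diag_mulVec_rot_mulVec_e1 (a b α : ℝ) :
    vnorm ((!![a, 0; 0, b] : Matrix (Fin 2) (Fin 2) ℝ).mulVec ((Rot α).mulVec e1)) =
      √(a ^ 2 * cos α ^ 2 + b ^ 2 * sin α ^ 2) := by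
  simp [vnorm, Rot, e1, Matrix.mulVec, dotProduct, Fin.sum_univ_two, mul_pow]

lemma sum_range_six_eq_two_mul_sum_range_three {f : ℝ → ℝ} (hf : Function.Periodic f π)
    (θ : ℝ) :
    ∑ k ∈ range 6, f (θ + k * π / 3) = 2 * ∑ k ∈ range 3, f (θ + k * π / 3) := by
  rw [show 6 = 3 + 3 from rfl, sum_range_add, two_mul]
  congr 1
  refine sum_congr rfl fun k _ ↦ ?_
  rw [show θ + ((3 + k : ℕ) : ℝ) * π / 3 = θ + k * π / 3 + π by push_cast; ring]
  exact hf _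

lemma exists_three_fourths_le_cos_sq (θ : ℝ) :
    ∃ k : ℕ, k < 3 ∧ 3 / 4 ≤ cos (θ + k * π / 3) ^ 2 := by
  by_contra! h
  have h0 := h 0 (by norm_num)
  have h1 := h 1 (by norm_num)
  have h2 := h 2 (by norm_num)
  rw [Nat.cast_zero, zero_mul, zero_div, add_zero] at h0
  rw [Nat.cast_one, one_mul, cos_add, cos_pi_div_three, sin_pi_div_three] at h1
  rw [show θ + ((2 : ℕ) : ℝ) * π / 3 = θ + (π - π / 3) by push_cast; ring, cos_add, cos_pi_sub,
    sin_pi_sub, cos_pi_div_three, sin_pi_div_three] at h2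
  set x := cos θ
  set y := sin θ
  have hr : √3 ^ 2 = 3 := sq_sqrt (by norm_num)
  have hxy : y ^ 2 = 1 - x ^ 2 := by linarith [sin_sq_add_cos_sq θ]
  -- the product of the two positive slacks below is `4 x² (4 x² - 3) < 0`
  have hprod : (3 - (x - √3 * y) ^ 2) * (3 - (x + √3 * y) ^ 2) = 4 * x ^ 2 * (4 * x ^ 2 - 3) := by
    linear_combination (-6 * y ^ 2 - 2 * x ^ 2 * y ^ 2 + √3 ^ 2 * y ^ 4 + 3 * y ^ 4) * hr +
      (-(3 * (3 - 3 * y ^ 2 + 5 * x ^ 2))) * hxy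
  nlinarith [mul_pos (show 0 < 3 - (x - √3 * y) ^ 2 by nlinarith)
    (show 0 < 3 - (x + √3 * y) ^ 2 by nlinarith), sq_nonneg x]

lemma exists_cos_sq_le_one_fourth (θ : ℝ) :
    ∃ k : ℕ, k < 3 ∧ cos (θ + k * π / 3) ^ 2 ≤ 1 / 4 := by
  obtain ⟨k, hk, h⟩ := exists_three_fourths_le_cos_sq (θ + π / 2)
  refine ⟨k, hk, ?_⟩
  rw [show θ + π / 2 + k * π / 3 = θ + k * π / 3 + π / 2 by ring, cos_add_pi_div_two, neg_sq]
    at h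
  linarith [sin_sq_add_cos_sq (θ + k * π / 3)]

lemma sub_le_three_mul_sub {s S u v : ℝ} (hs : 0 ≤ s) (hsS : s ≤ S) (hv : 0 ≤ v)
    (hu' : 4 * u ^ 2 ≤ 3 * s ^ 2 + S ^ 2) (hv' : s ^ 2 + 3 * S ^ 2 ≤ 4 * v ^ 2) :
    S - s ≤ 3 * (v - u) := by
  have h12u : 12 * u ≤ 7 * S + 11 * s := by nlinarith
  have hsq : (3 * u + S - s) ^ 2 ≤ (3 * v) ^ 2 := by
    nlinarith [mul_le_mul_of_nonneg_right h12u (sub_nonneg.2 hsS)]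
  nlinarith [abs_le_of_sq_le_sq' hsq (by positivity)]

lemma sq_sub_one_add_sq_sub_one_le {s S u v : ℝ} (hs : 0 ≤ s) (hsS : s ≤ S) (hu : 0 ≤ u)
    (hv : 0 ≤ v) (hsu : s ^ 2 ≤ u ^ 2) (hu' : 4 * u ^ 2 ≤ 3 * s ^ 2 + S ^ 2)
    (hv' : s ^ 2 + 3 * S ^ 2 ≤ 4 * v ^ 2) (hvS : v ^ 2 ≤ S ^ 2) :
    (s - 1) ^ 2 + (S - 1) ^ 2 ≤ 18 * ((u - 1) ^ 2 + (v - 1) ^ 2) := by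
  have hv_le : v ≤ S := abs_le_of_sq_le_sq' hvS (hs.trans hsS) |>.2
  rcases le_total S 1 with hS1 | h1S
  · have hs1 : s ≤ 1 := hsS.trans hS1
    -- `2 (1 - u) ≥ 1 - u² ≥ 3 (1 - s²) / 4 ≥ 3 (1 - s) / 4`
    have hu1 : 3 * (1 - s) ≤ 8 * (1 - u) := by
      have hS2 : S ^ 2 ≤ 1 := pow_le_one₀ (hs.trans hsS) hS1
      have hs2 : s ^ 2 ≤ s := by nlinarith
      nlinarith [sq_nonneg (1 - u)]
    nlinarith [pow_le_pow_left₀ (by linarith) hu1 2, pow_le_pow_left₀ (by linarith : 0 ≤ 1 - S)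
      (by linarith : 1 - S ≤ 1 - v) 2]
  rcases le_total 1 s with h1s | hs1
  · have hsu' : s ≤ u := abs_le_of_sq_le_sq' hsu hu |>.2
    have h1v : 1 ≤ v := by nlinarith
    -- `4 (v - 1) (S + 1) ≥ 4 (v² - 1) ≥ 3 (S² - 1)`
    have hv1 : 3 * (S - 1) ≤ 4 * (v - 1) := by
      nlinarith [mul_le_mul_of_nonneg_left hv_le (sub_nonneg.2 h1v)]
    nlinarith [pow_le_pow_left₀ (by linarith) hv1 2, pow_le_pow_left₀ (by linarith : 0 ≤ s - 1)
      (by linarith : s - 1 ≤ u - 1) 2]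
  · have hgap := pow_le_pow_left₀ (by linarith) (sub_le_three_mul_sub hs hsS hv hu' hv') 2
    nlinarith [mul_nonneg (sub_nonneg.2 hs1) (sub_nonneg.2 h1S), sq_nonneg (u + v - 2)]

lemma sq_sub_one_add_sq_sub_one_le_of_cos_sq {s S α β : ℝ} (hs : 0 ≤ s) (hsS : s ≤ S)
    (hα : 3 / 4 ≤ cos α ^ 2) (hβ : cos β ^ 2 ≤ 1 / 4) :
    (s - 1) ^ 2 + (S - 1) ^ 2 ≤ 18 * ((√(s ^ 2 * cos α ^ 2 + S ^ 2 * sin α ^ 2) - 1) ^ 2 +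
      (√(s ^ 2 * cos β ^ 2 + S ^ 2 * sin β ^ 2) - 1) ^ 2) := by
  have hsS2 : s ^ 2 ≤ S ^ 2 := pow_le_pow_left₀ hs hsS 2
  have hu := sq_sqrt (by positivity : 0 ≤ s ^ 2 * cos α ^ 2 + S ^ 2 * sin α ^ 2)
  have hv := sq_sqrt (by positivity : 0 ≤ s ^ 2 * cos β ^ 2 + S ^ 2 * sin β ^ 2)
  have hα' := sin_sq_add_cos_sq α
  have hβ' := sin_sq_add_cos_sq β
  apply sq_sub_one_add_sq_sub_one_le hs hsS (sqrt_nonneg _) (sqrt_nonneg _) <;>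
    nlinarith [mul_le_mul_of_nonneg_right hα (sub_nonneg.2 hsS2),
      mul_le_mul_of_nonneg_right hβ (sub_nonneg.2 hsS2)]

theorem stmt0 (σ₁ σ₂ θ : ℝ) (h0 : 0 ≤ σ₁) (h12 : σ₁ ≤ σ₂) :
    (σ₁ - 1)^2 + (σ₂ - 1)^2 ≤
      14 * ∑ k ∈ Finset.range 6,
        (vnorm ((!![σ₁, 0; 0, σ₂] : Matrix (Fin 2) (Fin 2) ℝ).mulVec
          ((Rot (θ + k * π / 3)).mulVec e1)) - 1)^2 := by
  set f : ℝ → ℝ := fun α ↦ (√(σ₁ ^ 2 * cos α ^ 2 + σ₂ ^ 2 * sin α ^ 2) - 1) ^ 2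
  have hf : Function.Periodic f π := fun α ↦ by simp only [f, cos_add_pi, sin_add_pi, neg_sq]
  simp_rw [vnorm_diag_mulVec_rot_mulVec_e1]
  change _ ≤ 14 * ∑ k ∈ range 6, f (θ + k * π / 3)
  rw [sum_range_six_eq_two_mul_sum_range_three hf]
  obtain ⟨i, hi, hα⟩ := exists_three_fourths_le_cos_sq θ
  obtain ⟨j, hj, hβ⟩ := exists_cos_sq_le_one_fourth θ
  have hij : i ≠ j := by rintro rfl; linarith
  have hf0 (α : ℝ) : 0 ≤ f α := sq_nonneg _
  have hpair : f (θ + i * π / 3) + f (θ + j * π / 3) ≤ ∑ k ∈ range 3, f (θ + k * π / 3) := by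
    rw [← sum_pair (f := fun k : ℕ ↦ f (θ + k * π / 3)) hij]
    exact sum_le_sum_of_subset_of_nonneg (by simp [insert_subset_iff, hi, hj]) fun _ _ _ ↦ hf0 _
  have hmain : (σ₁ - 1) ^ 2 + (σ₂ - 1) ^ 2 ≤ 18 * (f (θ + i * π / 3) + f (θ + j * π / 3)) :=
    sq_sub_one_add_sq_sub_one_le_of_cos_sq h0 h12 hα hβ
  linarith [hf0 (θ + i * π / 3), hf0 (θ + j * π / 3)]
end

section
/- For every θ ∈ ℝ there exist at least two indices k ∈ {0,1,2,3,4,5} such that sin²(θ + kπ/3) ≥ 3/4. -/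
/-!
Since `sin² ≥ 3/4` exactly when the angle lies in `[π/3, 2π/3]` modulo `π`, and the shifts
`θ + jπ/3` (`j ∈ ℤ`) step through that interval of length `π/3`, one of them lands in it.
Reducing `j` modulo `3` gives such a `k < 3`, and `k + 3` works as well because `sin²` has
period `π`.
-/

open Real

lemma sin_sq_add_int_mul_pi (x : ℝ) (n : ℤ) : sin (x + n * π) ^ 2 = sin x ^ 2 := by
  rw [sin_add_int_mul_pi, mul_pow, ← sq_abs ((-1 : ℝ) ^ n), abs_zpow, abs_neg, abs_one, one_zpow,
    one_pow, one_mul]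

lemma three_fourths_le_sin_sq {x : ℝ} (h₁ : π / 3 ≤ x) (h₂ : x ≤ 2 * π / 3) :
    3 / 4 ≤ sin x ^ 2 := by
  have hπ := pi_pos
  have hcos_le : cos x ≤ 1 / 2 := by
    rw [← cos_pi_div_three]
    exact cos_le_cos_of_nonneg_of_le_pi (by positivity) (by linarith) h₁
  have hcos_ge : -(1 / 2) ≤ cos x := by
    rw [← cos_pi_div_three, ← cos_pi_sub]
    exact cos_le_cos_of_nonneg_of_le_pi (by linarith) (by linarith) (by linarith)
  nlinarith [sin_sq x]

lemma exists_lt_three_three_fourths_le_sin_sq (θ : ℝ) :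
    ∃ k : ℕ, k < 3 ∧ 3 / 4 ≤ sin (θ + k * π / 3) ^ 2 := by
  obtain ⟨j, hj, -⟩ :=
    existsUnique_add_zsmul_mem_Ico (div_pos pi_pos three_pos) θ (π / 3)
  obtain ⟨hj₁, hj₂⟩ := hj
  rw [zsmul_eq_mul] at hj₁ hj₂
  obtain ⟨k, m, hk, hjkm⟩ : ∃ (k : ℕ) (m : ℤ), k < 3 ∧ j = k + 3 * m :=
    ⟨(j % 3).toNat, j / 3, by omega, by omega⟩
  refine ⟨k, hk, ?_⟩
  have hshift : θ + k * π / 3 = θ + j * (π / 3) + (-m : ℤ) * π := by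
    rw [hjkm]; push_cast; ring
  rw [hshift, sin_sq_add_int_mul_pi]
  exact three_fourths_le_sin_sq hj₁ (by linarith)

theorem stmt1 (θ : ℝ) :
    2 ≤ ((Finset.range 6).filter
      (fun k : ℕ => (3:ℝ)/4 ≤ Real.sin (θ + (k:ℝ) * π / 3) ^ 2)).card := by
  obtain ⟨k, hk, hsin⟩ := exists_lt_three_three_fourths_le_sin_sq θ
  have hsin' : (3:ℝ) / 4 ≤ sin (θ + ((k + 3 : ℕ) : ℝ) * π / 3) ^ 2 := by
    have hshift : θ + ((k + 3 : ℕ) : ℝ) * π / 3 = θ + k * π / 3 + (1 : ℤ) * π := by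
      push_cast; ring
    rwa [hshift, sin_sq_add_int_mul_pi]
  exact Finset.one_lt_card.2
    ⟨k, Finset.mem_filter.2 ⟨Finset.mem_range.2 (by omega), hsin⟩,
      k + 3, Finset.mem_filter.2 ⟨Finset.mem_range.2 (by omega), hsin'⟩, by omega⟩
end

section
/- Let p ≥ 2, let Φ(r) = |r|^p/p, let B¹ be the six unit directions {R_{kπ/3} e₁ : k = 0,…,5}, and let Ψ : ℝ → [0,∞) be continuous with Ψ(a) = 0 iff a = 1 and satisfying the growth estimate |Ψ(a) − Ψ(b)| ≤ C(|a|^{p/2−1} + |b|^{p/2−1} + 1)|a−b|. Define W(A) = ∑_{e∈B¹} Φ(|Aᵀe| − 1) + Ψ(det A). Then there exists c₂ > 0 such that W(A) ≥ c₂ dist^p(A, SO(2)) for every 2×2 real matrix A. -/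
open Real Finset

noncomputable def frob (A : Matrix (Fin 2) (Fin 2) ℝ) : ℝ :=
  Real.sqrt (∑ i, ∑ j, (A i j)^2)

noncomputable def Φ (p r : ℝ) : ℝ := |r| ^ p / p

def SO2 : Set (Matrix (Fin 2) (Fin 2) ℝ) :=
  {Q | Q.transpose * Q = 1 ∧ Q.det = 1}

noncomputable def distSO (A : Matrix (Fin 2) (Fin 2) ℝ) : ℝ :=
  sInf ((fun Q => frob (A - Q)) '' SO2)

/-- The full lattice energy density W(A) = ∑_{e∈B¹} Φ(|Aᵀe| − 1) + Ψ(det A). -/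
noncomputable def Wfull (p : ℝ) (Ψ : ℝ → ℝ) (A : Matrix (Fin 2) (Fin 2) ℝ) : ℝ :=
  (∑ k ∈ Finset.range 6,
    Φ p (vnorm (A.transpose.mulVec ((Rot ((k:ℝ) * π / 3)).mulVec e1)) - 1)) + Ψ A.det

/-!
Let `σ₁ ≥ σ₂ ≥ 0` be the singular values of `A`, so `σ₁² + σ₂² = |A|²` and `σ₁ σ₂ = |det A|`.
The squared stretches `|Aᵀe|²` of the three lattice directions at angles `0, π/3, 2π/3` have
mean `|A|²/2` and their deviations from it have sum of squares `(3/8)(σ₁² - σ₂²)²`, so one of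
them is at least `(3σ₁² + σ₂²)/4` and one at most `(σ₁² + 3σ₂²)/4`. Their square roots then
control `(σ₁ - 1)² + (σ₂ - 1)²`, and so the lattice energy bounds this quantity to the power `p/2`.

Comparing `A = !![a, b; c, d]` with the rotation by the argument of `(a + d) + i(c - b)` gives
`dist²(A, SO(2)) ≤ |A|² + 2 - 2√(|A|² + 2 det A)`, which is `(σ₁ - 1)² + (σ₂ - 1)²` when
`det A ≥ 0` and exceeds it by `4σ₂` when `det A < 0`. In the latter case the excess is absorbed by
the lattice energy if `σ₁ ≥ 2`; otherwise `det A ∈ [-4, 0]`, where `Ψ` has a positive minimum.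
-/

lemma frob_sq (A : Matrix (Fin 2) (Fin 2) ℝ) :
    frob A ^ 2 = A 0 0 ^ 2 + A 0 1 ^ 2 + A 1 0 ^ 2 + A 1 1 ^ 2 := by
  rw [frob, sq_sqrt (by positivity)]
  simp only [Fin.sum_univ_two]
  ring

structure IsSingularValues (A : Matrix (Fin 2) (Fin 2) ℝ) (σ₁ σ₂ : ℝ) : Prop where
  nonneg : 0 ≤ σ₂
  le : σ₂ ≤ σ₁
  sq_add_sq : σ₁ ^ 2 + σ₂ ^ 2 = frob A ^ 2
  mul_eq : σ₁ * σ₂ = |A.det|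

lemma two_mul_abs_det_le_frob_sq (A : Matrix (Fin 2) (Fin 2) ℝ) : 2 * |A.det| ≤ frob A ^ 2 := by
  rw [frob_sq, Matrix.det_fin_two]
  rcases abs_cases (A 0 0 * A 1 1 - A 0 1 * A 1 0) with ⟨h, -⟩ | ⟨h, -⟩ <;> rw [h]
  · nlinarith [sq_nonneg (A 0 0 - A 1 1), sq_nonneg (A 0 1 + A 1 0)]
  · nlinarith [sq_nonneg (A 0 0 + A 1 1), sq_nonneg (A 0 1 - A 1 0)]

lemma exists_isSingularValues (A : Matrix (Fin 2) (Fin 2) ℝ) :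
    ∃ σ₁ σ₂, IsSingularValues A σ₁ σ₂ := by
  have hle := two_mul_abs_det_le_frob_sq A
  have hP : 0 ≤ |A.det| := abs_nonneg _
  -- `u = σ₁ + σ₂` and `v = σ₁ - σ₂`
  set u := √(frob A ^ 2 + 2 * |A.det|)
  set v := √(frob A ^ 2 - 2 * |A.det|)
  have hu : u ^ 2 = frob A ^ 2 + 2 * |A.det| := sq_sqrt (by linarith)
  have hv : v ^ 2 = frob A ^ 2 - 2 * |A.det| := sq_sqrt (by linarith)
  refine ⟨(u + v) / 2, (u - v) / 2, ⟨?_, ?_, ?_, ?_⟩⟩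
  · linarith [sqrt_le_sqrt (by linarith : frob A ^ 2 - 2 * |A.det| ≤ frob A ^ 2 + 2 * |A.det|)]
  · linarith [sqrt_nonneg (frob A ^ 2 - 2 * |A.det|)]
  · linear_combination hu / 2 + hv / 2
  · linear_combination hu / 4 - hv / 4

noncomputable def stretch (A : Matrix (Fin 2) (Fin 2) ℝ) (θ : ℝ) : ℝ :=
  vnorm (A.transpose.mulVec ((Rot θ).mulVec e1))

lemma stretch_nonneg (A : Matrix (Fin 2) (Fin 2) ℝ) (θ : ℝ) : 0 ≤ stretch A θ :=
  sqrt_nonneg _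

lemma stretch_eq (A : Matrix (Fin 2) (Fin 2) ℝ) (θ : ℝ) :
    stretch A θ = √((A 0 0 * cos θ + A 1 0 * sin θ) ^ 2 + (A 0 1 * cos θ + A 1 1 * sin θ) ^ 2) := by
  simp [stretch, vnorm, Rot, e1, Matrix.mulVec, dotProduct, Fin.sum_univ_two]

lemma stretch_sq (A : Matrix (Fin 2) (Fin 2) ℝ) (θ : ℝ) :
    stretch A θ ^ 2 = (A 0 0 * cos θ + A 1 0 * sin θ) ^ 2 + (A 0 1 * cos θ + A 1 1 * sin θ) ^ 2 := by
  rw [stretch_eq, sq_sqrt (by positivity)]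

lemma stretch_add_pi (A : Matrix (Fin 2) (Fin 2) ℝ) (θ : ℝ) :
    stretch A (θ + π) = stretch A θ := by
  simp only [stretch_eq, cos_add_pi, sin_add_pi]
  ring_nf

lemma Wfull_eq (p : ℝ) (Ψ : ℝ → ℝ) (A : Matrix (Fin 2) (Fin 2) ℝ) :
    Wfull p Ψ A = 2 * ∑ k ∈ range 3, Φ p (stretch A (k * π / 3) - 1) + Ψ A.det := by
  rw [Wfull, show 6 = 3 + 3 from rfl, sum_range_add, two_mul]
  congr 2
  refine sum_congr rfl fun k _ => ?_
  change Φ p (stretch A _ - 1) = _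
  rw [show ((3 + k : ℕ) : ℝ) * π / 3 = k * π / 3 + π by push_cast; ring, stretch_add_pi]

lemma sum_range_three_stretch_sq (A : Matrix (Fin 2) (Fin 2) ℝ) (f : ℝ → ℝ) :
    ∑ k ∈ range 3, f (stretch A (k * π / 3) ^ 2) =
      f (A 0 0 ^ 2 + A 0 1 ^ 2)
      + f ((A 0 0 / 2 + A 1 0 * √3 / 2) ^ 2 + (A 0 1 / 2 + A 1 1 * √3 / 2) ^ 2)
      + f ((-A 0 0 / 2 + A 1 0 * √3 / 2) ^ 2 + (-A 0 1 / 2 + A 1 1 * √3 / 2) ^ 2) := by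
  simp only [sum_range_succ, sum_range_zero, zero_add, stretch_sq]
  rw [show ((2 : ℕ) : ℝ) * π / 3 = π - π / 3 by push_cast; ring]
  simp only [Nat.cast_zero, zero_mul, zero_div, Nat.cast_one, one_mul, cos_zero, sin_zero,
    cos_pi_sub, sin_pi_sub, cos_pi_div_three, sin_pi_div_three]
  ring_nf

lemma sum_stretch_sq (A : Matrix (Fin 2) (Fin 2) ℝ) :
    ∑ k ∈ range 3, stretch A (k * π / 3) ^ 2 = 3 / 2 * frob A ^ 2 := by
  have h3 : √3 ^ 2 = 3 := sq_sqrt (by norm_num)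
  have h := sum_range_three_stretch_sq A id
  simp only [id] at h
  rw [h, frob_sq]
  grind

lemma sum_sq_stretch_sq_sub (A : Matrix (Fin 2) (Fin 2) ℝ) :
    ∑ k ∈ range 3, (stretch A (k * π / 3) ^ 2 - frob A ^ 2 / 2) ^ 2 =
      3 / 2 * ((frob A ^ 2) ^ 2 / 4 - A.det ^ 2) := by
  have h3 : √3 ^ 2 = 3 := sq_sqrt (by norm_num)
  rw [sum_range_three_stretch_sq A (fun N => (N - frob A ^ 2 / 2) ^ 2), frob_sq, Matrix.det_fin_two]
  grind

lemma exists_mem_range_three_half_le (w : ℕ → ℝ) {ρ : ℝ} (hρ : 0 ≤ ρ)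
    (hsum : ∑ k ∈ range 3, w k = 0) (hsq : ∑ k ∈ range 3, w k ^ 2 = 3 / 2 * ρ ^ 2) :
    ∃ k ∈ range 3, ρ / 2 ≤ w k := by
  -- otherwise the gaps `ρ / 2 - w k` are positive with sum `3ρ/2`, which forces
  -- `∑ w k ^ 2 < 3/2 ρ ^ 2`
  by_contra! h
  simp only [sum_range_succ, sum_range_zero, zero_add] at hsum hsq
  have h0 := sub_pos.2 (h 0 (by simp))
  have h1 := sub_pos.2 (h 1 (by simp))
  have h2 := sub_pos.2 (h 2 (by simp))
  nlinarith [mul_pos h0 h1, mul_pos h1 h2, mul_pos h0 h2]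

lemma sq_add_sq_le_of_le_of_le {a b x y : ℝ} (hba : b ≤ a) (hx : (3 * a + b) / 4 ≤ x)
    (hy : y ≤ (a + b) / 2) : a ^ 2 + b ^ 2 ≤ 18 * (x ^ 2 + y ^ 2) := by
  rcases le_or_gt 0 (3 * a + b) with h₁ | h₁
  · have hx2 : ((3 * a + b) / 4) ^ 2 ≤ x ^ 2 := pow_le_pow_left₀ (by linarith) hx 2
    rcases le_or_gt (a + b) 0 with h₂ | h₂
    · have hy2 : ((a + b) / 2) ^ 2 ≤ y ^ 2 := by nlinarith
      -- `18 (((3a + b)/4)² + ((a + b)/2)²) - (a² + b²) = (218a² + 252ab + 74b²)/16 ≥ 0`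
      nlinarith [sq_nonneg (218 * a + 126 * b)]
    · nlinarith [sq_nonneg y]
  · have hy2 : ((a + b) / 2) ^ 2 ≤ y ^ 2 := by nlinarith
    nlinarith [sq_nonneg x]

lemma rpow_eq_sq_rpow_half {r : ℝ} (hr : 0 ≤ r) (p : ℝ) : r ^ p = (r ^ 2) ^ (p / 2) := by
  rw [rpow_div_two_eq_sqrt _ (sq_nonneg r), sqrt_sq hr]

lemma sq_add_sq_rpow_le {p : ℝ} (hp : 2 ≤ p) (r s : ℝ) :
    (r ^ 2 + s ^ 2) ^ (p / 2) ≤ 2 ^ (p / 2 - 1) * (|r| ^ p + |s| ^ p) := by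
  have h := NNReal.rpow_add_le_mul_rpow_add_rpow ⟨r ^ 2, sq_nonneg r⟩ ⟨s ^ 2, sq_nonneg s⟩
    (by linarith : 1 ≤ p / 2)
  rw [rpow_eq_sq_rpow_half (abs_nonneg r), rpow_eq_sq_rpow_half (abs_nonneg s), sq_abs, sq_abs]
  exact_mod_cast h

lemma rot_mem_SO2 (θ : ℝ) : Rot θ ∈ SO2 := by
  refine ⟨?_, ?_⟩
  · ext i j
    fin_cases i <;> fin_cases j <;>
      simp [Rot, Matrix.mul_apply, Fin.sum_univ_two, ← sq, mul_comm]
  · simp [Rot, Matrix.det_fin_two, ← sq]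

lemma distSO_le {A Q : Matrix (Fin 2) (Fin 2) ℝ} (hQ : Q ∈ SO2) : distSO A ≤ frob (A - Q) :=
  csInf_le ⟨0, by rintro _ ⟨Q, -, rfl⟩; exact sqrt_nonneg _⟩ ⟨Q, hQ, rfl⟩

lemma distSO_nonneg (A : Matrix (Fin 2) (Fin 2) ℝ) : 0 ≤ distSO A :=
  le_csInf ⟨_, Rot 0, rot_mem_SO2 0, rfl⟩ (by rintro _ ⟨Q, -, rfl⟩; exact sqrt_nonneg _)

lemma frob_sub_rot_sq (A : Matrix (Fin 2) (Fin 2) ℝ) (θ : ℝ) :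
    frob (A - Rot θ) ^ 2 =
      frob A ^ 2 + 2 - 2 * ((A 0 0 + A 1 1) * cos θ + (A 1 0 - A 0 1) * sin θ) := by
  rw [frob_sq, frob_sq]
  simp only [Rot, Matrix.sub_apply, Matrix.of_apply, Matrix.cons_val', Matrix.cons_val_zero,
    Matrix.cons_val_fin_one, Matrix.cons_val_one]
  linear_combination 2 * cos_sq_add_sin_sq θ

lemma sq_distSO_le (A : Matrix (Fin 2) (Fin 2) ℝ) :
    distSO A ^ 2 ≤ frob A ^ 2 + 2 - 2 * √(frob A ^ 2 + 2 * A.det) := by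
  set z : ℂ := ⟨A 0 0 + A 1 1, A 1 0 - A 0 1⟩
  have hz : ‖z‖ = √(frob A ^ 2 + 2 * A.det) := by
    rw [Complex.norm_eq_sqrt_sq_add_sq, frob_sq, Matrix.det_fin_two]
    congr 1
    ring
  have hc : ‖z‖ * cos (Complex.arg z) = A 0 0 + A 1 1 := Complex.norm_mul_cos_arg z
  have hs : ‖z‖ * sin (Complex.arg z) = A 1 0 - A 0 1 := Complex.norm_mul_sin_arg z
  have hinner : (A 0 0 + A 1 1) * cos (Complex.arg z) + (A 1 0 - A 0 1) * sin (Complex.arg z)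
      = ‖z‖ := by
    linear_combination -cos (Complex.arg z) * hc - sin (Complex.arg z) * hs
      + ‖z‖ * cos_sq_add_sin_sq (Complex.arg z)
  calc distSO A ^ 2 ≤ frob (A - Rot (Complex.arg z)) ^ 2 :=
        pow_le_pow_left₀ (distSO_nonneg A) (distSO_le (rot_mem_SO2 _)) 2
    _ = _ := by rw [frob_sub_rot_sq, hinner, hz]

namespace IsSingularValues

variable {A : Matrix (Fin 2) (Fin 2) ℝ} {σ₁ σ₂ : ℝ}

lemma exists_stretch_sq_le_ge (hσ : IsSingularValues A σ₁ σ₂) :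
    (∃ i ∈ range 3, (3 * σ₁ ^ 2 + σ₂ ^ 2) / 4 ≤ stretch A (i * π / 3) ^ 2) ∧
      ∃ k ∈ range 3, stretch A (k * π / 3) ^ 2 ≤ (σ₁ ^ 2 + 3 * σ₂ ^ 2) / 4 := by
  set w : ℕ → ℝ := fun k => stretch A (k * π / 3) ^ 2 - frob A ^ 2 / 2
  have hρ : 0 ≤ (σ₁ ^ 2 - σ₂ ^ 2) / 2 := by nlinarith [hσ.nonneg, hσ.le]
  have hsum : ∑ k ∈ range 3, w k = 0 := by
    simp only [w, sum_sub_distrib, sum_stretch_sq, sum_const, card_range]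
    ring
  have hsq : ∑ k ∈ range 3, w k ^ 2 = 3 / 2 * ((σ₁ ^ 2 - σ₂ ^ 2) / 2) ^ 2 := by
    rw [sum_sq_stretch_sq_sub, ← hσ.sq_add_sq, ← sq_abs A.det, ← hσ.mul_eq]
    ring
  refine ⟨?_, ?_⟩
  · obtain ⟨i, hi, h⟩ := exists_mem_range_three_half_le w hρ hsum hsq
    refine ⟨i, hi, ?_⟩
    simp only [w, ← hσ.sq_add_sq] at h
    linarith
  · obtain ⟨k, hk, h⟩ := exists_mem_range_three_half_le (-w) hρ
      (by simp [sum_neg_distrib, hsum]) (by simpa using hsq)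
    refine ⟨k, hk, ?_⟩
    simp only [Pi.neg_apply, w, ← hσ.sq_add_sq] at h
    linarith

lemma exists_sq_sub_one_le (hσ : IsSingularValues A σ₁ σ₂) : ∃ i ∈ range 3, ∃ k ∈ range 3,
      (σ₁ - 1) ^ 2 + (σ₂ - 1) ^ 2 ≤
        18 * ((stretch A (i * π / 3) - 1) ^ 2 + (stretch A (k * π / 3) - 1) ^ 2) := by
  obtain ⟨⟨i, hi, hx⟩, ⟨k, hk, hy⟩⟩ := hσ.exists_stretch_sq_le_ge
  have h₂ := hσ.nonneg
  have h₁₂ := hσ.le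
  have hx' : (3 * σ₁ + σ₂) / 4 ≤ stretch A (i * π / 3) :=
    abs_le_of_sq_le_sq' (by nlinarith) (stretch_nonneg A _) |>.2
  have hy' : stretch A (k * π / 3) ≤ (σ₁ + σ₂) / 2 :=
    (pow_le_pow_iff_left₀ (stretch_nonneg A _) (by linarith) two_ne_zero).1 (by nlinarith)
  exact ⟨i, hi, k, hk, sq_add_sq_le_of_le_of_le (by linarith) (by linarith) (by linarith)⟩

lemma rpow_le_Wfull_sub {p : ℝ} (hp : 2 ≤ p) (Ψ : ℝ → ℝ)
    (hσ : IsSingularValues A σ₁ σ₂) :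
    ((σ₁ - 1) ^ 2 + (σ₂ - 1) ^ 2) ^ (p / 2) ≤ p * 36 ^ (p / 2) * (Wfull p Ψ A - Ψ A.det) := by
  obtain ⟨i, hi, k, hk, hΔ⟩ := hσ.exists_sq_sub_one_le
  set x := stretch A (i * π / 3) - 1
  set y := stretch A (k * π / 3) - 1
  have hp0 : 0 < p := by linarith
  have hxy : |x| ^ p + |y| ^ p ≤ p * (Wfull p Ψ A - Ψ A.det) := by
    have hΦ : ∀ j ∈ range 3, 0 ≤ Φ p (stretch A (j * π / 3) - 1) := fun j _ => by
      unfold Φ; positivity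
    have hx := single_le_sum hΦ hi
    have hy := single_le_sum hΦ hk
    rw [Wfull_eq, add_sub_cancel_right]
    calc |x| ^ p + |y| ^ p = p * (Φ p x + Φ p y) := by unfold Φ; field_simp
      _ ≤ p * (2 * ∑ j ∈ range 3, Φ p (stretch A (j * π / 3) - 1)) := by gcongr; linarith
  calc ((σ₁ - 1) ^ 2 + (σ₂ - 1) ^ 2) ^ (p / 2) ≤ (18 * (x ^ 2 + y ^ 2)) ^ (p / 2) := by gcongr
    _ = 18 ^ (p / 2) * (x ^ 2 + y ^ 2) ^ (p / 2) := mul_rpow (by norm_num) (by positivity)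
    _ ≤ 18 ^ (p / 2) * (2 ^ (p / 2) * (p * (Wfull p Ψ A - Ψ A.det))) := by
      gcongr
      calc (x ^ 2 + y ^ 2) ^ (p / 2) ≤ 2 ^ (p / 2 - 1) * (|x| ^ p + |y| ^ p) :=
            sq_add_sq_rpow_le hp x y
        _ ≤ 2 ^ (p / 2) * (p * (Wfull p Ψ A - Ψ A.det)) := by
          gcongr
          · exact one_le_two
          · linarith
    _ = p * 36 ^ (p / 2) * (Wfull p Ψ A - Ψ A.det) := by
      rw [show (36 : ℝ) = 18 * 2 by norm_num, mul_rpow (by norm_num) (by norm_num)]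
      ring

lemma sq_distSO_le_or (hσ : IsSingularValues A σ₁ σ₂) :
    distSO A ^ 2 ≤ 10 * ((σ₁ - 1) ^ 2 + (σ₂ - 1) ^ 2) ∨
      (distSO A ^ 2 ≤ 10 ∧ A.det ∈ Set.Icc (-4) 0) := by
  have h := sq_distSO_le A
  rw [← hσ.sq_add_sq] at h
  have h₂ := hσ.nonneg
  have h₁₂ := hσ.le
  have hm := hσ.mul_eq
  rcases le_or_gt 0 A.det with hδ | hδ
  · rw [abs_of_nonneg hδ] at hm
    rw [show σ₁ ^ 2 + σ₂ ^ 2 + 2 * A.det = (σ₁ + σ₂) ^ 2 by rw [← hm]; ring,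
      sqrt_sq (by linarith)] at h
    left
    nlinarith [sq_nonneg (σ₁ - 1), sq_nonneg (σ₂ - 1)]
  · rw [abs_of_neg hδ] at hm
    rw [show σ₁ ^ 2 + σ₂ ^ 2 + 2 * A.det = (σ₁ - σ₂) ^ 2 by linear_combination 2 * hm,
      sqrt_sq (by linarith)] at h
    rcases le_or_gt 2 σ₁ with h₁ | h₁
    · left
      nlinarith
    · right
      exact ⟨by nlinarith, by nlinarith, hδ.le⟩

end IsSingularValues

theorem stmt12_general (p : ℝ) (hp : 2 ≤ p) (Ψ : ℝ → ℝ) (hcont : Continuous Ψ)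
    (hΨpos : ∀ a, 0 ≤ Ψ a) (hΨzero : ∀ a, Ψ a = 0 ↔ a = 1) :
    ∃ c₂ > 0, ∀ A : Matrix (Fin 2) (Fin 2) ℝ,
      c₂ * distSO A ^ p ≤ Wfull p Ψ A := by
  obtain ⟨μ, hμ, hΨμ⟩ := (isCompact_Icc (a := -4) (b := 0)).exists_forall_le' (a := 0)
    hcont.continuousOn fun a ha => (hΨpos a).lt_of_ne' fun h => by linarith [(hΨzero a).1 h, ha.2]
  set K := p * 36 ^ (p / 2)
  have hK : 0 < K := by positivity
  refine ⟨min K⁻¹ μ / 10 ^ (p / 2), by positivity, fun A => ?_⟩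
  obtain ⟨σ₁, σ₂, hσ⟩ := exists_isSingularValues A
  set Δ := (σ₁ - 1) ^ 2 + (σ₂ - 1) ^ 2
  have hW : Δ ^ (p / 2) ≤ K * (Wfull p Ψ A - Ψ A.det) := hσ.rpow_le_Wfull_sub hp Ψ
  have hWΨ : Ψ A.det ≤ Wfull p Ψ A := by
    nlinarith [(rpow_nonneg (by positivity : 0 ≤ Δ) (p / 2)).trans hW]
  rw [rpow_eq_sq_rpow_half (distSO_nonneg A)]
  rcases hσ.sq_distSO_le_or with h | ⟨h, hdet⟩
  · calc _ ≤ min K⁻¹ μ / 10 ^ (p / 2) * (10 * Δ) ^ (p / 2) := by gcongr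
      _ = min K⁻¹ μ * Δ ^ (p / 2) := by rw [mul_rpow (by norm_num) (by positivity)]; field_simp
      _ ≤ K⁻¹ * (K * (Wfull p Ψ A - Ψ A.det)) := by gcongr; exact min_le_left _ _
      _ ≤ Wfull p Ψ A := by rw [inv_mul_cancel_left₀ hK.ne']; linarith [hΨpos A.det]
  · calc _ ≤ min K⁻¹ μ / 10 ^ (p / 2) * 10 ^ (p / 2) := by gcongr
      _ ≤ μ := by rw [div_mul_cancel₀ _ (by positivity)]; exact min_le_right _ _
      _ ≤ Wfull p Ψ A := (hΨμ _ hdet).trans hWΨ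

theorem stmt12 (p : ℝ) (hp : 2 ≤ p) (Ψ : ℝ → ℝ) (hcont : Continuous Ψ)
    (hΨpos : ∀ a, 0 ≤ Ψ a) (hΨzero : ∀ a, Ψ a = 0 ↔ a = 1)
    (C : ℝ) (hC : 0 < C)
    (hgrowth : ∀ a b : ℝ, |Ψ a - Ψ b| ≤ C * (|a| ^ (p/2 - 1) + |b| ^ (p/2 - 1) + 1) * |a - b|) :
    ∃ c₂ > 0, ∀ A : Matrix (Fin 2) (Fin 2) ℝ,
      c₂ * distSO A ^ p ≤ Wfull p Ψ A :=
  stmt12_general p hp Ψ hcont hΨpos hΨzero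
end

section
/- Let 0 < s < 1, 1 ≤ p < ∞, and let f ∈ W^{s,p}(0, π). Then the even extension f̃ of f to (−π, π), defined by f̃(θ) = f(|θ|), belongs to W^{s,p}(−π, π) and satisfies ‖f̃‖_{W^{s,p}(−π,π)} ≤ C ‖f‖_{W^{s,p}(0,π)} for a universal constant C > 0 (depending only on s, p). -/
/-!
Split `(-a, a)²` into its four quadrants and reflect each onto `(0, a)²`. There the numerator
`|f̃ u - f̃ v|ᵖ` of the Gagliardo kernel of the even extension `f̃` equals that of `f` at
`(|u|, |v|)`, while by the reverse triangle inequality `||u| - |v|| ≤ |u - v|` the denominator can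
only grow. So the seminorm at most quadruples and the `Lᵖ` part exactly doubles, whence `C = 4`
works for `p ≥ 1`.
-/

open Real MeasureTheory Set Function

/-- The L^p part of the W^{s,p} norm (raised to the power p) on an interval I. -/
noncomputable def lpPart (p : ℝ) (I : Set ℝ) (f : ℝ → ℝ) : ℝ :=
  ∫ x in I, |f x| ^ p

/-- The Gagliardo seminorm (raised to the power p) on an interval I. -/
noncomputable def semPart (s p : ℝ) (I : Set ℝ) (f : ℝ → ℝ) : ℝ :=
  ∫ q in I ×ˢ I, |f q.1 - f q.2| ^ p / |q.1 - q.2| ^ (1 + s * p)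

/-- Membership in W^{s,p}(I): both parts of the norm are finite (integrable). -/
def MemWsp (s p : ℝ) (I : Set ℝ) (f : ℝ → ℝ) : Prop :=
  IntegrableOn (fun x => |f x| ^ p) I volume ∧
  IntegrableOn (fun q : ℝ × ℝ => |f q.1 - f q.2| ^ p / |q.1 - q.2| ^ (1 + s * p))
    (I ×ˢ I) volume

section Fold

variable {α E : Type*} [MeasurableSpace α] [NormedAddCommGroup E] {μ : Measure α} {σ : α → α}
  {A S : Set α} {F : α → E}

theorem integrableOn_preimage_of_involutive (hσ : MeasurePreserving σ μ μ) (hσm : Measurable σ)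
    (hσi : Involutive σ) (hFσ : IntegrableOn (F ∘ σ) A μ) : IntegrableOn F (σ ⁻¹' A) μ := by
  have := (hσ.integrableOn_comp_preimage
    (MeasurableEquiv.ofInvolutive σ hσi hσm).measurableEmbedding).2 hFσ
  rwa [comp_assoc, hσi.comp_self, comp_id] at this

theorem MeasureTheory.IntegrableOn.of_fold (hσ : MeasurePreserving σ μ μ) (hσm : Measurable σ)
    (hσi : Involutive σ) (hS : S =ᵐ[μ] (A ∪ σ ⁻¹' A : Set α)) (hF : IntegrableOn F A μ)
    (hFσ : IntegrableOn (F ∘ σ) A μ) : IntegrableOn F S μ :=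
  (hF.union (integrableOn_preimage_of_involutive hσ hσm hσi hFσ)).congr_set_ae hS

theorem setIntegral_fold [NormedSpace ℝ E] (hσ : MeasurePreserving σ μ μ) (hσm : Measurable σ)
    (hσi : Involutive σ) (hA : MeasurableSet A) (hdisj : Disjoint A (σ ⁻¹' A))
    (hS : S =ᵐ[μ] (A ∪ σ ⁻¹' A : Set α)) (hF : IntegrableOn F A μ)
    (hFσ : IntegrableOn (F ∘ σ) A μ) :
    ∫ x in S, F x ∂μ = ∫ x in A, F x ∂μ + ∫ x in A, F (σ x) ∂μ := by
  rw [setIntegral_congr_set hS, setIntegral_union hdisj (hA.preimage hσm) hF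
    (integrableOn_preimage_of_involutive hσ hσm hσi hFσ)]
  congr 1
  have := hσ.setIntegral_preimage_emb
    (MeasurableEquiv.ofInvolutive σ hσi hσm).measurableEmbedding (F ∘ σ) A
  simpa only [comp_apply, hσi _] using this

end Fold

section SymmetricInterval

variable {E : Type*} [NormedAddCommGroup E] (a : ℝ)

theorem preimage_neg_Ioo_zero : Neg.neg ⁻¹' Ioo 0 a = Ioo (-a) 0 := by
  simp

theorem Ioo_neg_ae_eq_union : Ioo (-a) a =ᵐ[volume] (Ioo 0 a ∪ Neg.neg ⁻¹' Ioo 0 a : Set ℝ) := by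
  rw [preimage_neg_Ioo_zero]
  rcases le_or_gt a 0 with ha | ha
  · simp [Ioo_eq_empty, ha]
  · rw [union_comm, ← Ioc_union_Ioo_eq_Ioo (by linarith) ha]
    exact (Ioo_ae_eq_Ioc.union (Filter.EventuallyEq.refl _ _)).symm

theorem disjoint_Ioo_zero_neg_preimage : Disjoint (Ioo 0 a) (Neg.neg ⁻¹' Ioo 0 a) := by
  rw [preimage_neg_Ioo_zero]
  exact disjoint_left.2 fun x hx hx' => hx.1.not_gt hx'.2

theorem MeasureTheory.IntegrableOn.Ioo_neg_of_even {u : ℝ → E} (heven : ∀ x, u (-x) = u x)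
    (hu : IntegrableOn u (Ioo 0 a)) : IntegrableOn u (Ioo (-a) a) :=
  hu.of_fold (Measure.measurePreserving_neg volume) measurable_neg neg_involutive
    (Ioo_neg_ae_eq_union a) (by rwa [show u ∘ Neg.neg = u from funext heven])

theorem setIntegral_Ioo_neg_of_even [NormedSpace ℝ E] {u : ℝ → E} (heven : ∀ x, u (-x) = u x)
    (hu : IntegrableOn u (Ioo 0 a)) : ∫ x in Ioo (-a) a, u x = 2 • ∫ x in Ioo 0 a, u x := by
  rw [setIntegral_fold (Measure.measurePreserving_neg volume) measurable_neg neg_involutive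
    measurableSet_Ioo (disjoint_Ioo_zero_neg_preimage a) (Ioo_neg_ae_eq_union a) hu
    (by rwa [show u ∘ Neg.neg = u from funext heven])]
  simp only [heven, two_smul]

theorem measurePreserving_neg_prodMap_id :
    MeasurePreserving (Prod.map Neg.neg id : ℝ × ℝ → ℝ × ℝ) volume volume :=
  (Measure.measurePreserving_neg volume).prod (MeasurePreserving.id volume)

theorem measurePreserving_id_prodMap_neg :
    MeasurePreserving (Prod.map id Neg.neg : ℝ × ℝ → ℝ × ℝ) volume volume :=
  (MeasurePreserving.id volume).prod (Measure.measurePreserving_neg volume)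

variable {T : Set ℝ}

theorem Ioo_neg_prod_ae_eq_union : Ioo (-a) a ×ˢ T =ᵐ[volume]
    (Ioo 0 a ×ˢ T ∪ Prod.map Neg.neg id ⁻¹' (Ioo 0 a ×ˢ T) : Set (ℝ × ℝ)) := by
  rw [preimage_prod_map_prod, preimage_id, ← union_prod]
  exact Measure.set_prod_ae_eq (Ioo_neg_ae_eq_union a) (Filter.EventuallyEq.refl _ _)

theorem prod_Ioo_neg_ae_eq_union : T ×ˢ Ioo (-a) a =ᵐ[volume]
    (T ×ˢ Ioo 0 a ∪ Prod.map id Neg.neg ⁻¹' (T ×ˢ Ioo 0 a) : Set (ℝ × ℝ)) := by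
  rw [preimage_prod_map_prod, preimage_id, ← prod_union]
  exact Measure.set_prod_ae_eq (Filter.EventuallyEq.refl _ _) (Ioo_neg_ae_eq_union a)

variable {a} {G : ℝ × ℝ → E}

theorem MeasureTheory.IntegrableOn.Ioo_neg_prod (hG : IntegrableOn G (Ioo 0 a ×ˢ T))
    (hGσ : IntegrableOn (fun q => G (-q.1, q.2)) (Ioo 0 a ×ˢ T)) :
    IntegrableOn G (Ioo (-a) a ×ˢ T) :=
  hG.of_fold measurePreserving_neg_prodMap_id (measurable_neg.prodMap measurable_id)
    (Involutive.prodMap neg_involutive fun _ => rfl) (Ioo_neg_prod_ae_eq_union a) hGσ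

theorem MeasureTheory.IntegrableOn.prod_Ioo_neg (hG : IntegrableOn G (T ×ˢ Ioo 0 a))
    (hGσ : IntegrableOn (fun q => G (q.1, -q.2)) (T ×ˢ Ioo 0 a)) :
    IntegrableOn G (T ×ˢ Ioo (-a) a) :=
  hG.of_fold measurePreserving_id_prodMap_neg (measurable_id.prodMap measurable_neg)
    (Involutive.prodMap (fun _ => rfl) neg_involutive) (prod_Ioo_neg_ae_eq_union a) hGσ

theorem setIntegral_Ioo_neg_prod [NormedSpace ℝ E] (hT : MeasurableSet T)
    (hG : IntegrableOn G (Ioo 0 a ×ˢ T))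
    (hGσ : IntegrableOn (fun q => G (-q.1, q.2)) (Ioo 0 a ×ˢ T)) :
    ∫ q in Ioo (-a) a ×ˢ T, G q =
      (∫ q in Ioo 0 a ×ˢ T, G q) + ∫ q in Ioo 0 a ×ˢ T, G (-q.1, q.2) := by
  have hdisj : Disjoint (Ioo 0 a ×ˢ T) (Prod.map Neg.neg id ⁻¹' (Ioo 0 a ×ˢ T)) := by
    rw [preimage_prod_map_prod, preimage_id]
    exact disjoint_prod.2 (Or.inl (disjoint_Ioo_zero_neg_preimage a))
  exact setIntegral_fold (σ := Prod.map Neg.neg id) measurePreserving_neg_prodMap_id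
    (measurable_neg.prodMap measurable_id)
    (Involutive.prodMap neg_involutive fun _ => rfl) (measurableSet_Ioo.prod hT) hdisj
    (Ioo_neg_prod_ae_eq_union a) hG hGσ

theorem setIntegral_prod_Ioo_neg [NormedSpace ℝ E] (hT : MeasurableSet T)
    (hG : IntegrableOn G (T ×ˢ Ioo 0 a))
    (hGσ : IntegrableOn (fun q => G (q.1, -q.2)) (T ×ˢ Ioo 0 a)) :
    ∫ q in T ×ˢ Ioo (-a) a, G q =
      (∫ q in T ×ˢ Ioo 0 a, G q) + ∫ q in T ×ˢ Ioo 0 a, G (q.1, -q.2) := by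
  have hdisj : Disjoint (T ×ˢ Ioo 0 a) (Prod.map id Neg.neg ⁻¹' (T ×ˢ Ioo 0 a)) := by
    rw [preimage_prod_map_prod, preimage_id]
    exact disjoint_prod.2 (Or.inr (disjoint_Ioo_zero_neg_preimage a))
  exact setIntegral_fold (σ := Prod.map id Neg.neg) measurePreserving_id_prodMap_neg
    (measurable_id.prodMap measurable_neg)
    (Involutive.prodMap (fun _ => rfl) neg_involutive) (hT.prod measurableSet_Ioo) hdisj
    (prod_Ioo_neg_ae_eq_union a) hG hGσ

variable {F : ℝ × ℝ → E}

theorem MeasureTheory.IntegrableOn.Ioo_neg_prod_of_quadrants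
    (h₁ : IntegrableOn F (Ioo 0 a ×ˢ Ioo 0 a))
    (h₂ : IntegrableOn (fun q => F (q.1, -q.2)) (Ioo 0 a ×ˢ Ioo 0 a))
    (h₃ : IntegrableOn (fun q => F (-q.1, q.2)) (Ioo 0 a ×ˢ Ioo 0 a))
    (h₄ : IntegrableOn (fun q => F (-q.1, -q.2)) (Ioo 0 a ×ˢ Ioo 0 a)) :
    IntegrableOn F (Ioo (-a) a ×ˢ Ioo (-a) a) :=
  (h₁.prod_Ioo_neg h₂).Ioo_neg_prod (G := F) (h₃.prod_Ioo_neg h₄)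

theorem setIntegral_Ioo_neg_prod_eq_quadrants [NormedSpace ℝ E]
    (h₁ : IntegrableOn F (Ioo 0 a ×ˢ Ioo 0 a))
    (h₂ : IntegrableOn (fun q => F (q.1, -q.2)) (Ioo 0 a ×ˢ Ioo 0 a))
    (h₃ : IntegrableOn (fun q => F (-q.1, q.2)) (Ioo 0 a ×ˢ Ioo 0 a))
    (h₄ : IntegrableOn (fun q => F (-q.1, -q.2)) (Ioo 0 a ×ˢ Ioo 0 a)) :
    ∫ q in Ioo (-a) a ×ˢ Ioo (-a) a, F q =
      (∫ q in Ioo 0 a ×ˢ Ioo 0 a, F q) + (∫ q in Ioo 0 a ×ˢ Ioo 0 a, F (q.1, -q.2)) +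
      ((∫ q in Ioo 0 a ×ˢ Ioo 0 a, F (-q.1, q.2)) + ∫ q in Ioo 0 a ×ˢ Ioo 0 a, F (-q.1, -q.2)) := by
  rw [setIntegral_Ioo_neg_prod measurableSet_Ioo (h₁.prod_Ioo_neg h₂) (h₃.prod_Ioo_neg h₄),
    setIntegral_prod_Ioo_neg measurableSet_Ioo h₁ h₂,
    setIntegral_prod_Ioo_neg (G := fun q => F (-q.1, q.2)) measurableSet_Ioo h₃ h₄]

end SymmetricInterval

noncomputable def gagliardoKernel (s p : ℝ) (f : ℝ → ℝ) (q : ℝ × ℝ) : ℝ :=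
  |f q.1 - f q.2| ^ p / |q.1 - q.2| ^ (1 + s * p)

/-- The kernel of `θ ↦ f |θ|` at `q` is that of `f` at `(|q.1|, |q.2|)` times this factor, which
is at most `1` by the reverse triangle inequality. -/
noncomputable def foldingFactor (e : ℝ) (q : ℝ × ℝ) : ℝ :=
  (|(|q.1| - |q.2|)| / |q.1 - q.2|) ^ e

section Kernel

variable {s p e : ℝ} {f : ℝ → ℝ}

theorem gagliardoKernel_nonneg (q : ℝ × ℝ) : 0 ≤ gagliardoKernel s p f q := by
  unfold gagliardoKernel; positivity

theorem foldingFactor_nonneg (q : ℝ × ℝ) : 0 ≤ foldingFactor e q := by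
  unfold foldingFactor; positivity

theorem foldingFactor_le_one (he : 0 ≤ e) (q : ℝ × ℝ) : foldingFactor e q ≤ 1 :=
  rpow_le_one (by positivity)
    (div_le_one_of_le₀ (abs_abs_sub_abs_le_abs_sub _ _) (abs_nonneg _)) he

theorem measurable_foldingFactor : Measurable (foldingFactor e) := by
  unfold foldingFactor; fun_prop

theorem gagliardoKernel_comp_abs (hp : p ≠ 0) (q : ℝ × ℝ) :
    gagliardoKernel s p (fun θ => f |θ|) q =
      gagliardoKernel s p f (|q.1|, |q.2|) * foldingFactor (1 + s * p) q := by
  by_cases hq : |q.1| = |q.2|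
  · simp [gagliardoKernel, hq, zero_rpow hp]
  have hA : 0 < |(|q.1| - |q.2|)| := abs_pos.2 (sub_ne_zero.2 hq)
  have hB : 0 < |q.1 - q.2| := abs_pos.2 (sub_ne_zero.2 fun h => hq (h ▸ rfl))
  have hAe := (rpow_pos_of_pos hA (1 + s * p)).ne'
  unfold gagliardoKernel foldingFactor
  rw [div_rpow hA.le hB.le]
  field_simp

end Kernel

section EvenExtension

variable {s p a : ℝ} {f : ℝ → ℝ} {e₁ e₂ : ℝ → ℝ}

theorem gagliardoKernel_comp_abs_eqOn_quadrant (hp : p ≠ 0) (habs₁ : ∀ x, |e₁ x| = |x|)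
    (habs₂ : ∀ x, |e₂ x| = |x|) :
    EqOn (fun q => gagliardoKernel s p (fun θ => f |θ|) (e₁ q.1, e₂ q.2))
      (fun q => gagliardoKernel s p f q * foldingFactor (1 + s * p) (e₁ q.1, e₂ q.2))
      (Ioo 0 a ×ˢ Ioo 0 a) := by
  rintro ⟨x, y⟩ ⟨hx, hy⟩
  simp only [gagliardoKernel_comp_abs hp, habs₁, habs₂, abs_of_pos hx.1, abs_of_pos hy.1]

theorem integrableOn_gagliardoKernel_comp_abs_quadrant (hp : p ≠ 0) (hsp : 0 ≤ 1 + s * p)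
    (he₁ : Measurable e₁) (he₂ : Measurable e₂) (habs₁ : ∀ x, |e₁ x| = |x|)
    (habs₂ : ∀ x, |e₂ x| = |x|) (hf : IntegrableOn (gagliardoKernel s p f) (Ioo 0 a ×ˢ Ioo 0 a)) :
    IntegrableOn (fun q => gagliardoKernel s p (fun θ => f |θ|) (e₁ q.1, e₂ q.2))
      (Ioo 0 a ×ˢ Ioo 0 a) := by
  have hbdd : ∀ q, ‖foldingFactor (1 + s * p) q‖ ≤ 1 := fun q => by
    rw [norm_of_nonneg (foldingFactor_nonneg q)]; exact foldingFactor_le_one hsp q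
  refine IntegrableOn.congr_fun (hf.mul_bdd ?_ (ae_of_all _ fun q => hbdd _))
    (gagliardoKernel_comp_abs_eqOn_quadrant hp habs₁ habs₂).symm
    (measurableSet_Ioo.prod measurableSet_Ioo)
  exact (measurable_foldingFactor.comp
    ((he₁.comp measurable_fst).prodMk (he₂.comp measurable_snd))).aestronglyMeasurable

theorem setIntegral_gagliardoKernel_comp_abs_quadrant_le (hp : p ≠ 0) (hsp : 0 ≤ 1 + s * p)
    (he₁ : Measurable e₁) (he₂ : Measurable e₂) (habs₁ : ∀ x, |e₁ x| = |x|)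
    (habs₂ : ∀ x, |e₂ x| = |x|) (hf : IntegrableOn (gagliardoKernel s p f) (Ioo 0 a ×ˢ Ioo 0 a)) :
    ∫ q in Ioo 0 a ×ˢ Ioo 0 a, gagliardoKernel s p (fun θ => f |θ|) (e₁ q.1, e₂ q.2) ≤
      semPart s p (Ioo 0 a) f := by
  refine setIntegral_mono_on
    (integrableOn_gagliardoKernel_comp_abs_quadrant hp hsp he₁ he₂ habs₁ habs₂ hf) hf
    (measurableSet_Ioo.prod measurableSet_Ioo) fun q hq => ?_
  exact (gagliardoKernel_comp_abs_eqOn_quadrant hp habs₁ habs₂ hq).trans_le <|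
    mul_le_of_le_one_right (gagliardoKernel_nonneg q) (foldingFactor_le_one hsp _)

theorem integrableOn_gagliardoKernel_comp_abs (hp : p ≠ 0) (hsp : 0 ≤ 1 + s * p)
    (hf : IntegrableOn (gagliardoKernel s p f) (Ioo 0 a ×ˢ Ioo 0 a)) :
    IntegrableOn (gagliardoKernel s p fun θ => f |θ|) (Ioo (-a) a ×ˢ Ioo (-a) a) :=
  have quadrant (e₁ e₂ : ℝ → ℝ) (he₁ : Measurable e₁) (he₂ : Measurable e₂)
      (habs₁ : ∀ x, |e₁ x| = |x|) (habs₂ : ∀ x, |e₂ x| = |x|) :=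
    integrableOn_gagliardoKernel_comp_abs_quadrant hp hsp he₁ he₂ habs₁ habs₂ hf
  IntegrableOn.Ioo_neg_prod_of_quadrants (F := gagliardoKernel s p fun θ => f |θ|)
    (quadrant id id measurable_id measurable_id (fun _ => rfl) (fun _ => rfl))
    (quadrant id Neg.neg measurable_id measurable_neg (fun _ => rfl) abs_neg)
    (quadrant Neg.neg id measurable_neg measurable_id abs_neg (fun _ => rfl))
    (quadrant Neg.neg Neg.neg measurable_neg measurable_neg abs_neg abs_neg)

theorem semPart_comp_abs_le (hp : p ≠ 0) (hsp : 0 ≤ 1 + s * p)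
    (hf : IntegrableOn (gagliardoKernel s p f) (Ioo 0 a ×ˢ Ioo 0 a)) :
    semPart s p (Ioo (-a) a) (fun θ => f |θ|) ≤ 4 * semPart s p (Ioo 0 a) f := by
  have quadrant (e₁ e₂ : ℝ → ℝ) (he₁ : Measurable e₁) (he₂ : Measurable e₂)
      (habs₁ : ∀ x, |e₁ x| = |x|) (habs₂ : ∀ x, |e₂ x| = |x|) :=
    integrableOn_gagliardoKernel_comp_abs_quadrant hp hsp he₁ he₂ habs₁ habs₂ hf
  have bound (e₁ e₂ : ℝ → ℝ) (he₁ : Measurable e₁) (he₂ : Measurable e₂)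
      (habs₁ : ∀ x, |e₁ x| = |x|) (habs₂ : ∀ x, |e₂ x| = |x|) :=
    setIntegral_gagliardoKernel_comp_abs_quadrant_le hp hsp he₁ he₂ habs₁ habs₂ hf
  change ∫ q in _, gagliardoKernel s p (fun θ => f |θ|) q ≤ _
  rw [setIntegral_Ioo_neg_prod_eq_quadrants (F := gagliardoKernel s p fun θ => f |θ|)
    (quadrant id id measurable_id measurable_id (fun _ => rfl) (fun _ => rfl))
    (quadrant id Neg.neg measurable_id measurable_neg (fun _ => rfl) abs_neg)
    (quadrant Neg.neg id measurable_neg measurable_id abs_neg (fun _ => rfl))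
    (quadrant Neg.neg Neg.neg measurable_neg measurable_neg abs_neg abs_neg)]
  exact (add_le_add
    (add_le_add (bound id id measurable_id measurable_id (fun _ => rfl) (fun _ => rfl))
      (bound id Neg.neg measurable_id measurable_neg (fun _ => rfl) abs_neg))
    (add_le_add (bound Neg.neg id measurable_neg measurable_id abs_neg (fun _ => rfl))
      (bound Neg.neg Neg.neg measurable_neg measurable_neg abs_neg abs_neg))).trans_eq (by ring)

theorem lpPart_comp_abs (hf : IntegrableOn (fun x => |f x| ^ p) (Ioo 0 a)) :
    lpPart p (Ioo (-a) a) (fun θ => f |θ|) = 2 * lpPart p (Ioo 0 a) f := by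
  have hEq : EqOn (fun x => |f x| ^ p) (fun x => |f (|x|)| ^ p) (Ioo 0 a) :=
    fun x hx => by simp only [abs_of_pos hx.1]
  rw [lpPart, setIntegral_Ioo_neg_of_even a (fun x => by simp only [abs_neg])
    (hf.congr_fun hEq measurableSet_Ioo), setIntegral_congr_fun measurableSet_Ioo hEq.symm,
    nsmul_eq_mul, Nat.cast_ofNat, lpPart]

theorem MemWsp.comp_abs (hp : p ≠ 0) (hsp : 0 ≤ 1 + s * p) (hf : MemWsp s p (Ioo 0 a) f) :
    MemWsp s p (Ioo (-a) a) (fun θ => f |θ|) :=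
  ⟨IntegrableOn.Ioo_neg_of_even a (fun x => by simp only [abs_neg])
    (hf.1.congr_fun (fun x hx => by simp only [abs_of_pos hx.1]) measurableSet_Ioo),
    integrableOn_gagliardoKernel_comp_abs hp hsp hf.2⟩

end EvenExtension

theorem lpPart_nonneg (p : ℝ) (I : Set ℝ) (f : ℝ → ℝ) : 0 ≤ lpPart p I f :=
  integral_nonneg fun _ => by positivity

theorem semPart_nonneg (s p : ℝ) (I : Set ℝ) (f : ℝ → ℝ) : 0 ≤ semPart s p I f :=
  integral_nonneg fun q => gagliardoKernel_nonneg (s := s) (p := p) (f := f) q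

theorem rpow_one_div_le_mul_rpow_one_div {x y c p : ℝ} (hx : 0 ≤ x) (hy : 0 ≤ y) (hc : 1 ≤ c)
    (hp : 1 ≤ p) (h : x ≤ c * y) : x ^ (1 / p) ≤ c * y ^ (1 / p) := by
  have hp' : 0 ≤ 1 / p := by positivity
  calc x ^ (1 / p) ≤ (c * y) ^ (1 / p) := rpow_le_rpow hx h hp'
    _ = c ^ (1 / p) * y ^ (1 / p) := mul_rpow (by linarith) hy
    _ ≤ c * y ^ (1 / p) := by
      gcongr
      exact rpow_le_self_of_one_le hc ((div_le_one (by linarith)).2 hp)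

theorem stmt18_general (s p : ℝ) (hs0 : 0 < s) (hp : 1 ≤ p) :
    ∃ C > 0, ∀ f : ℝ → ℝ, MemWsp s p (Ioo 0 π) f →
      MemWsp s p (Ioo (-π) π) (fun θ => f |θ|) ∧
      (lpPart p (Ioo (-π) π) (fun θ => f |θ|)
        + semPart s p (Ioo (-π) π) (fun θ => f |θ|)) ^ (1/p)
      ≤ C * (lpPart p (Ioo 0 π) f + semPart s p (Ioo 0 π) f) ^ (1/p) := by
  have hp0 : p ≠ 0 := by positivity
  have hsp : 0 ≤ 1 + s * p := by positivity
  refine ⟨4, by norm_num, fun f hf => ⟨hf.comp_abs hp0 hsp, ?_⟩⟩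
  refine rpow_one_div_le_mul_rpow_one_div
    (add_nonneg (lpPart_nonneg _ _ _) (semPart_nonneg _ _ _ _))
    (add_nonneg (lpPart_nonneg _ _ _) (semPart_nonneg _ _ _ _)) (by norm_num) hp ?_
  linarith [lpPart_comp_abs hf.1, semPart_comp_abs_le hp0 hsp hf.2, lpPart_nonneg p (Ioo 0 π) f]

/-- the even extension f̃(θ) = f(|θ|) of f ∈ W^{s,p}(0,π) belongs to
W^{s,p}(−π,π) with ‖f̃‖ ≤ C‖f‖, C depending only on s and p. -/
theorem stmt18 (s p : ℝ) (hs0 : 0 < s) (hs1 : s < 1) (hp : 1 ≤ p) :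
    ∃ C > 0, ∀ f : ℝ → ℝ, MemWsp s p (Ioo 0 π) f →
      MemWsp s p (Ioo (-π) π) (fun θ => f |θ|) ∧
      (lpPart p (Ioo (-π) π) (fun θ => f |θ|)
        + semPart s p (Ioo (-π) π) (fun θ => f |θ|)) ^ (1/p)
      ≤ C * (lpPart p (Ioo 0 π) f + semPart s p (Ioo 0 π) f) ^ (1/p) :=
  stmt18_general s p hs0 hp
end
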